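/- arXiv:math/0308128 — 2 statements merged into one kernel-verified Lean document; each statement's English description precedes it below -/
import Mathlib

section
/- Let u ∈ V be a nonzero isotropic vector and let T_u : Ŵ → Ŵ be the operator x ↦ u·x. Then the kernel of T_u equals the image of T_u; this subspace has dimension 4 and Q̂ vanishes identically on it. Moreover, for every 3-dimensional isotropic subspace U ⊆ V, one has L_U ⊆ Ker(T_u) if and only if u ∈ U. -/
namespace SSD

noncomputable section

/-- `V` is the 7-dimensional complex vector space `ℂ^7`. -/
abbrev V7 : Type := Fin 7 → ℂ

/-- `Ŵ` is the 8-dimensional spin space, with basis (in this order):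
`1, v̂₅, v̂₆, v̂₇, v̂₅v̂₆, v̂₆v̂₇, v̂₅v̂₇, v̂₅v̂₆v̂₇`. -/
abbrev W8 : Type := Fin 8 → ℂ

/-- The constant `1/√2` as a complex number. -/
def is2 : ℂ := ((Real.sqrt 2 : ℝ) : ℂ)⁻¹

/-- The Clifford action of `v ∈ V` on `x ∈ Ŵ`:  `e₅,e₆,e₇` act by exterior
multiplication by `v̂₅,v̂₆,v̂₇`; `e₁,e₂,e₃` act by `−∂/∂v̂₇, ∂/∂v̂₆, −∂/∂v̂₅`;
`e₄` acts by `(1/√2)·(−1)^deg`. Written out in coordinates. -/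
def actFun (v : V7) (x : W8) : W8 := fun k =>
  match k with
  | 0 => -(v 0) * x 3 + v 1 * x 2 - v 2 * x 1 + is2 * v 3 * x 0
  | 1 => v 0 * x 6 - v 1 * x 4 - is2 * v 3 * x 1 + v 4 * x 0
  | 2 => v 0 * x 5 - v 2 * x 4 - is2 * v 3 * x 2 + v 5 * x 0
  | 3 => v 1 * x 5 - v 2 * x 6 - is2 * v 3 * x 3 + v 6 * x 0
  | 4 => -(v 0) * x 7 + is2 * v 3 * x 4 + v 4 * x 2 - v 5 * x 1
  | 5 => -(v 2) * x 7 + is2 * v 3 * x 5 + v 5 * x 3 - v 6 * x 2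
  | 6 => -(v 1) * x 7 + is2 * v 3 * x 6 + v 4 * x 3 - v 6 * x 1
  | 7 => -(is2 * v 3) * x 7 + v 4 * x 5 - v 5 * x 6 + v 6 * x 4

/-- The action `v · x`, packaged as a bilinear map. -/
def act : V7 →ₗ[ℂ] W8 →ₗ[ℂ] W8 :=
  LinearMap.mk₂ ℂ actFun
    (fun m m' n => by funext k; fin_cases k <;> simp [actFun] <;> ring)
    (fun c m n => by funext k; fin_cases k <;> simp [actFun] <;> ring)
    (fun m n n' => by funext k; fin_cases k <;> simp [actFun] <;> ring)
    (fun c m n => by funext k; fin_cases k <;> simp [actFun] <;> ring)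

/-- The bilinear form `B` on `V`: `B(eᵢ,eⱼ) = (−1)^(i+1)` if `i+j=8`, else `0`. -/
def Bform (u w : V7) : ℂ :=
  u 0 * w 6 + u 6 * w 0 - u 1 * w 5 - u 5 * w 1 + u 2 * w 4 + u 4 * w 2 - u 3 * w 3

/-- The quadratic form `Q(v) = B(v,v)/2` on `V`. -/
def Qform (v : V7) : ℂ := Bform v v / 2

/-- The quadratic form `Q̂` on `Ŵ`:
`Q̂ = α_∅α₅₆₇ + α₆α₅₇ − α₇α₅₆ − α₆₇α₅` in the coordinates of the basis above. -/
def Qhat (x : W8) : ℂ := x 0 * x 7 + x 2 * x 6 - x 3 * x 4 - x 5 * x 1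

/-- The bilinear form `B̂(p,q) = Q̂(p+q) − Q̂(p) − Q̂(q)` on `Ŵ`. -/
def Bhat (p q : W8) : ℂ := Qhat (p + q) - Qhat p - Qhat q

/-- A subspace `U ⊆ V` is isotropic if `B` vanishes identically on it. -/
def IsIsotropic (U : Submodule ℂ V7) : Prop :=
  ∀ u ∈ U, ∀ w ∈ U, Bform u w = 0

/-- `L_U = {x ∈ Ŵ | u·x = 0 for all u ∈ U}`. -/
def LU (U : Submodule ℂ V7) : Submodule ℂ W8 :=
  ⨅ u ∈ U, LinearMap.ker (act u)

/-- `ψ : Ŵ → V` is an invariant surjection with spinor `p` if `p ≠ 0`, `ψ(p)=0`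
and `ψ(v·p) = v` for all `v ∈ V`. -/
def IsInvSurj (ψ : W8 →ₗ[ℂ] V7) (p : W8) : Prop :=
  p ≠ 0 ∧ ψ p = 0 ∧ ∀ v : V7, ψ (act v p) = v

/-!
Everything follows from the Clifford relation `v·(w·x) + w·(v·x) = -B(v,w) x`.
For isotropic `u` it gives `T_u² = 0`, so `Im T_u ⊆ Ker T_u`; picking `w` with `B(u,w) ≠ 0`
(nondegeneracy of `B`) shows that `x = T_u(-B(u,w)⁻¹ w·x)` for `x ∈ Ker T_u`, so the two agree
and have dimension `8/2 = 4`. Since `Q̂(u·y) = Q(u) Q̂(y)`, `Q̂` vanishes on `Im T_u`.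

For a 3-dimensional isotropic `U`, each of three basis vectors acts with square zero on the
common kernel of the previous ones (they anticommute), so its kernel there has at least half
that dimension and `dim L_U ≥ 8/2³ = 1`. A nonzero `x ∈ L_U` with `u·x = 0` forces
`B(u,U) = 0`, so `U + ℂu` is isotropic; isotropic subspaces of the nondegenerate
7-dimensional `V` have dimension `≤ 3`, hence `u ∈ U`.
-/

open Module LinearMap

lemma is2_sq : is2 ^ 2 = 2⁻¹ := by
  rw [is2, inv_pow, ← Complex.ofReal_pow, Real.sq_sqrt (by norm_num)]
  norm_num

lemma Bform_comm (v w : V7) : Bform v w = Bform w v := by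
  unfold Bform
  ring

lemma Bform_self (v : V7) : Bform v v = 2 * Qform v := by
  unfold Qform
  ring

theorem act_act_add_act_act (v w : V7) (x : W8) :
    act v (act w x) + act w (act v x) = -Bform v w • x := by
  funext k
  fin_cases k <;>
  · simp only [Fin.reduceFinMk, act, mk₂_apply, actFun, Bform, Pi.add_apply,
      Pi.smul_apply, smul_eq_mul]
    ring_nf
    simp only [is2_sq]
    ring

theorem act_act_self (v : V7) (x : W8) : act v (act v x) = -Qform v • x := by
  apply smul_right_injective W8 (two_ne_zero' ℂ)
  have h := act_act_add_act_act v v x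
  rw [Bform_self] at h
  simp only [two_smul, h]
  module

theorem act_mem_ker_act {v w : V7} (hvw : Bform w v = 0) {x : W8} (hx : x ∈ ker (act w)) :
    act v x ∈ ker (act w) := by
  have h := act_act_add_act_act w v x
  rw [hvw, mem_ker.1 hx, map_zero, add_zero, neg_zero, zero_smul] at h
  exact h

theorem Qhat_act (v : V7) (x : W8) : Qhat (act v x) = Qform v * Qhat x := by
  simp only [act, mk₂_apply, actFun, Qhat, Qform, Bform]
  ring_nf
  simp only [is2_sq]
  ring

def BformBilin : LinearMap.BilinForm ℂ V7 :=
  mk₂ ℂ Bform (fun _ _ _ => by simp only [Bform, Pi.add_apply]; ring)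
    (fun _ _ _ => by simp only [Bform, Pi.smul_apply, smul_eq_mul]; ring)
    (fun _ _ _ => by simp only [Bform, Pi.add_apply]; ring)
    (fun _ _ _ => by simp only [Bform, Pi.smul_apply, smul_eq_mul]; ring)

lemma eq_zero_of_forall_Bform_eq_zero {v : V7} (hv : ∀ w, Bform v w = 0) : v = 0 := by
  funext i
  have h := hv (Pi.single i.rev 1)
  fin_cases i <;> simpa [Bform] using h

lemma BformBilin_nondegenerate : BformBilin.Nondegenerate := by
  refine ⟨fun v hv => eq_zero_of_forall_Bform_eq_zero hv, fun v hv => ?_⟩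
  refine eq_zero_of_forall_Bform_eq_zero fun w => ?_
  rw [Bform_comm]
  exact hv w

lemma exists_Bform_ne_zero {u : V7} (hu : u ≠ 0) : ∃ w, Bform u w ≠ 0 := by
  by_contra! h
  exact hu (eq_zero_of_forall_Bform_eq_zero h)

lemma isIsotropic_iff_le_orthogonal (U : Submodule ℂ V7) :
    IsIsotropic U ↔ U ≤ BformBilin.orthogonal U :=
  ⟨fun h _ hm _ hn => h _ hn _ hm, fun h _ hu _ hw => h hw _ hu⟩

lemma IsIsotropic.finrank_le {U : Submodule ℂ V7} (hU : IsIsotropic U) : finrank ℂ U ≤ 3 := by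
  have h := Submodule.finrank_mono ((isIsotropic_iff_le_orthogonal U).1 hU)
  rw [BilinForm.finrank_orthogonal BformBilin_nondegenerate, finrank_fin_fun] at h
  omega

lemma isIsotropic_span {s : Set V7} (hs : ∀ v ∈ s, ∀ w ∈ s, Bform v w = 0) :
    IsIsotropic (Submodule.span ℂ s) := by
  rw [isIsotropic_iff_le_orthogonal, Submodule.span_le]
  intro w hw
  have : Submodule.span ℂ s ≤ ker (BformBilin.flip w) :=
    Submodule.span_le.2 fun v hv => hs v hv w hw
  exact fun v hv => this hv

theorem IsIsotropic.mem_of_finrank_eq_three {U : Submodule ℂ V7} (hU : IsIsotropic U)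
    (h3 : finrank ℂ U = 3) {u : V7} (hu : Qform u = 0) (huU : ∀ w ∈ U, Bform u w = 0) :
    u ∈ U := by
  set U' := Submodule.span ℂ (insert u (U : Set V7))
  have hU' : IsIsotropic U' := by
    apply isIsotropic_span
    rintro v (rfl | hv) w (rfl | hw)
    · rw [Bform_self, hu, mul_zero]
    · exact huU w hw
    · rw [Bform_comm]; exact huU v hv
    · exact hU v hv w hw
  have hle : U ≤ U' := fun v hv => Submodule.subset_span (Set.mem_insert_of_mem u hv)
  have hUU' : U = U' := Submodule.eq_of_le_of_finrank_le hle (h3 ▸ hU'.finrank_le)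
  exact hUU' ▸ Submodule.subset_span (Set.mem_insert u _)

theorem finrank_le_two_mul_finrank_ker_of_mul_self_eq_zero {K M : Type*} [DivisionRing K]
    [AddCommGroup M] [Module K M] [FiniteDimensional K M] {f : Module.End K M} (hf : f * f = 0) :
    finrank K M ≤ 2 * finrank K (ker f) := by
  have hle := Submodule.finrank_mono (range_le_ker_iff.2 hf)
  have := finrank_range_add_finrank_ker f
  omega

theorem finrank_le_two_mul_finrank_ker_act_inf {a : V7} (ha : Qform a = 0)
    {S : Submodule ℂ W8} (hS : ∀ x ∈ S, act a x ∈ S) :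
    finrank ℂ S ≤ 2 * finrank ℂ (ker (act a) ⊓ S : Submodule ℂ W8) := by
  have hsq : (act a).restrict hS * (act a).restrict hS = 0 := by
    ext x
    simp [act_act_self, ha]
  have h := finrank_le_two_mul_finrank_ker_of_mul_self_eq_zero hsq
  rwa [ker_restrict, ← Submodule.finrank_map_subtype_eq S, Submodule.map_comap_subtype,
    inf_comm] at h

theorem finrank_le_two_pow_mul_finrank_iInf_ker (s : Finset V7)
    (hs : ∀ v ∈ s, ∀ w ∈ s, Bform v w = 0) :
    finrank ℂ W8 ≤ 2 ^ s.card * finrank ℂ (⨅ v ∈ s, ker (act v) : Submodule ℂ W8) := by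
  induction s using Finset.induction_on with
  | empty =>
    have htop : (⨅ v ∈ (∅ : Finset V7), ker (act v)) = ⊤ :=
      top_unique (le_iInf₂ fun v hv => (Finset.notMem_empty v hv).elim)
    rw [htop, finrank_top, Finset.card_empty, pow_zero, one_mul]
  | insert a s ha ih =>
    have hs' : ∀ v ∈ s, ∀ w ∈ s, Bform v w = 0 := fun v hv w hw =>
      hs v (Finset.mem_insert_of_mem hv) w (Finset.mem_insert_of_mem hw)
    have hinv : ∀ x ∈ (⨅ v ∈ s, ker (act v) : Submodule ℂ W8),
        act a x ∈ (⨅ v ∈ s, ker (act v) : Submodule ℂ W8) := by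
      simp only [Submodule.mem_iInf]
      exact fun x hx v hv => act_mem_ker_act
        (hs v (Finset.mem_insert_of_mem hv) a (Finset.mem_insert_self a s)) (hx v hv)
    have ha0 : Qform a = 0 := by
      have := hs a (Finset.mem_insert_self a s) a (Finset.mem_insert_self a s)
      rw [Bform_self] at this
      simpa using this
    have h := finrank_le_two_mul_finrank_ker_act_inf ha0 hinv
    rw [Finset.iInf_insert, Finset.card_insert_of_notMem ha, pow_succ, mul_assoc]
    exact (ih hs').trans (Nat.mul_le_mul_left _ h)

lemma mem_LU_iff {U : Submodule ℂ V7} {x : W8} : x ∈ LU U ↔ ∀ w ∈ U, act w x = 0 := by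
  simp only [LU, Submodule.mem_iInf, mem_ker]

lemma LU_span (s : Set V7) : LU (Submodule.span ℂ s) = ⨅ v ∈ s, ker (act v) := by
  ext x
  have key : (∀ w ∈ Submodule.span ℂ s, act w x = 0) ↔ ∀ v ∈ s, act v x = 0 :=
    ⟨fun h v hv => h v (Submodule.subset_span hv),
      fun h _ hw => (Submodule.span_le (p := ker (act.flip x))).2 h hw⟩
  simpa only [mem_LU_iff, Submodule.mem_iInf, mem_ker] using key

theorem IsIsotropic.LU_ne_bot {U : Submodule ℂ V7} (hU : IsIsotropic U) (h3 : finrank ℂ U = 3) :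
    LU U ≠ ⊥ := by
  let b := Module.finBasisOfFinrankEq ℂ U h3
  let s : Finset V7 := Finset.univ.image fun i => (b i : V7)
  have hsU : ∀ v ∈ s, v ∈ U := by
    simp only [s, Finset.mem_image]
    rintro _ ⟨i, -, rfl⟩
    exact (b i).2
  have hspan : Submodule.span ℂ (s : Set V7) = U := by
    rw [Finset.coe_image, Finset.coe_univ, Set.image_univ,
      show Set.range (fun i => (b i : V7)) = U.subtype '' Set.range b from Set.range_comp _ _,
      Submodule.span_image, b.span_eq, Submodule.map_subtype_top]
  have hcard : s.card ≤ 3 := (Finset.card_image_le).trans (by simp)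
  have h := finrank_le_two_pow_mul_finrank_iInf_ker s fun v hv w hw =>
    hU v (hsU v hv) w (hsU w hw)
  have hLU : LU U = ⨅ v ∈ s, ker (act v) := by
    rw [← hspan, LU_span]
    simp only [Finset.mem_coe]
  rw [← hLU, finrank_fin_fun] at h
  intro hbot
  rw [hbot, finrank_bot] at h
  omega

theorem Bform_eq_zero_of_act_eq_zero {v w : V7} {x : W8} (hx : x ≠ 0) (hv : act v x = 0)
    (hw : act w x = 0) : Bform v w = 0 := by
  have h := act_act_add_act_act v w x
  rw [hw, hv, map_zero, map_zero, add_zero, eq_comm, smul_eq_zero, neg_eq_zero] at h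
  exact h.resolve_right hx

theorem ker_act_eq_range_act {u : V7} (hu : u ≠ 0) (hq : Qform u = 0) :
    ker (act u) = range (act u) := by
  refine le_antisymm (fun x hx => ?_) (range_le_ker_iff.2 ?_)
  · obtain ⟨w, hw⟩ := exists_Bform_ne_zero hu
    have h := act_act_add_act_act u w x
    rw [mem_ker.1 hx, map_zero, add_zero] at h
    refine ⟨-(Bform u w)⁻¹ • act w x, ?_⟩
    rw [map_smul, h, smul_smul, neg_mul_neg, inv_mul_cancel₀ hw, one_smul]
  · ext x
    simp [act_act_self, hq]

/-- for a nonzero isotropic `u ∈ V`, `Ker(T_u) = Im(T_u)` where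
`T_u : x ↦ u·x`; this subspace has dimension 4, `Q̂` vanishes on it, and for
every 3-dimensional isotropic `U ⊆ V` one has `L_U ⊆ Ker(T_u) ↔ u ∈ U`. -/
theorem statement_8 (u : V7) (hu : u ≠ 0) (hq : Qform u = 0) :
    LinearMap.ker (act u) = LinearMap.range (act u) ∧
    Module.finrank ℂ (LinearMap.ker (act u)) = 4 ∧
    (∀ x ∈ LinearMap.ker (act u), Qhat x = 0) ∧
    (∀ U : Submodule ℂ V7, Module.finrank ℂ U = 3 → IsIsotropic U →
      (LU U ≤ LinearMap.ker (act u) ↔ u ∈ U)) := by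
  have hkr := ker_act_eq_range_act hu hq
  refine ⟨hkr, ?_, ?_, fun U h3 hU =>
    ⟨fun hle => ?_, fun huU x hx => mem_LU_iff.1 hx u huU⟩⟩
  · have h := finrank_range_add_finrank_ker (act u)
    rw [← hkr, finrank_fin_fun] at h
    omega
  · intro x hx
    obtain ⟨y, rfl⟩ := hkr ▸ hx
    rw [Qhat_act, hq, zero_mul]
  · obtain ⟨x, hxU, hx0⟩ := (Submodule.ne_bot_iff _).1 (hU.LU_ne_bot h3)
    exact hU.mem_of_finrank_eq_three h3 hq fun w hw =>
      Bform_eq_zero_of_act_eq_zero hx0 (hle hxU) (mem_LU_iff.1 hxU w hw)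

end
end SSD
end

section
/- Let p ∈ Ŵ satisfy Q̂(p) ≠ 0 and define w(a,b,c) = B̂(a·(b·(c·p)), p) for a,b,c ∈ V. For every v ∈ V with Q(v) ≠ 0, the kernel {u ∈ V : w(v,u,a) = 0 for all a ∈ V} of the skew-symmetric 2-form w(v,·,·) is the one-dimensional subspace ℂv spanned by v. -/
namespace SSD

set_option maxRecDepth 10000
set_option maxHeartbeats 1000000

noncomputable section

lemma is2_sq_s16 : is2 * is2 = (1/2 : ℂ) := by
  have h2 : ((Real.sqrt 2 : ℝ) : ℂ) * ((Real.sqrt 2 : ℝ) : ℂ) = 2 := by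
    norm_cast
    rw [Real.mul_self_sqrt] <;> norm_num
  rw [is2, ← mul_inv, h2]
  norm_num

lemma act_apply (v : V7) (x : W8) : act v x = actFun v x := rfl

lemma cv0 (a0 a1 a2 a3 a4 a5 a6 : ℂ) : (![a0,a1,a2,a3,a4,a5,a6] : V7) 0 = a0 := rfl
lemma cv1 (a0 a1 a2 a3 a4 a5 a6 : ℂ) : (![a0,a1,a2,a3,a4,a5,a6] : V7) 1 = a1 := rfl
lemma cv2 (a0 a1 a2 a3 a4 a5 a6 : ℂ) : (![a0,a1,a2,a3,a4,a5,a6] : V7) 2 = a2 := rfl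
lemma cv3 (a0 a1 a2 a3 a4 a5 a6 : ℂ) : (![a0,a1,a2,a3,a4,a5,a6] : V7) 3 = a3 := rfl
lemma cv4 (a0 a1 a2 a3 a4 a5 a6 : ℂ) : (![a0,a1,a2,a3,a4,a5,a6] : V7) 4 = a4 := rfl
lemma cv5 (a0 a1 a2 a3 a4 a5 a6 : ℂ) : (![a0,a1,a2,a3,a4,a5,a6] : V7) 5 = a5 := rfl
lemma cv6 (a0 a1 a2 a3 a4 a5 a6 : ℂ) : (![a0,a1,a2,a3,a4,a5,a6] : V7) 6 = a6 := rfl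

lemma actc0 (a : V7) (x : W8) : act a x 0 = -(a 0) * x 3 + a 1 * x 2 - a 2 * x 1 + is2 * a 3 * x 0 := rfl
lemma actc1 (a : V7) (x : W8) : act a x 1 = a 0 * x 6 - a 1 * x 4 - is2 * a 3 * x 1 + a 4 * x 0 := rfl
lemma actc2 (a : V7) (x : W8) : act a x 2 = a 0 * x 5 - a 2 * x 4 - is2 * a 3 * x 2 + a 5 * x 0 := rfl
lemma actc3 (a : V7) (x : W8) : act a x 3 = a 1 * x 5 - a 2 * x 6 - is2 * a 3 * x 3 + a 6 * x 0 := rfl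
lemma actc4 (a : V7) (x : W8) : act a x 4 = -(a 0) * x 7 + is2 * a 3 * x 4 + a 4 * x 2 - a 5 * x 1 := rfl
lemma actc5 (a : V7) (x : W8) : act a x 5 = -(a 2) * x 7 + is2 * a 3 * x 5 + a 5 * x 3 - a 6 * x 2 := rfl
lemma actc6 (a : V7) (x : W8) : act a x 6 = -(a 1) * x 7 + is2 * a 3 * x 6 + a 4 * x 3 - a 6 * x 1 := rfl
lemma actc7 (a : V7) (x : W8) : act a x 7 = -(is2 * a 3) * x 7 + a 4 * x 5 - a 5 * x 6 + a 6 * x 4 := rfl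

lemma bhat_expand (x y : W8) : Bhat x y = (1) * x 0 * y 7 + (-1) * x 1 * y 5 + (1) * x 2 * y 6 + (-1) * x 3 * y 4 + (-1) * x 4 * y 3 + (-1) * x 5 * y 1 + (1) * x 6 * y 2 + (1) * x 7 * y 0 := by
  simp only [Bhat, Qhat, Pi.add_apply]; ring

lemma bhat_act_expand (a : V7) (x y : W8) : Bhat (act a x) y = (-1) * a 0 * x 3 * y 7 + (1) * a 0 * x 5 * y 6 + (-1) * a 0 * x 6 * y 5 + (1) * a 0 * x 7 * y 3 + (1) * a 1 * x 2 * y 7 + (1) * a 1 * x 4 * y 5 + (-1) * a 1 * x 5 * y 4 + (-1) * a 1 * x 7 * y 2 + (-1) * a 2 * x 1 * y 7 + (-1) * a 2 * x 4 * y 6 + (1) * a 2 * x 6 * y 4 + (1) * a 2 * x 7 * y 1 + (1) * a 3 * is2 * x 0 * y 7 + (1) * a 3 * is2 * x 1 * y 5 + (-1) * a 3 * is2 * x 2 * y 6 + (1) * a 3 * is2 * x 3 * y 4 + (-1) * a 3 * is2 * x 4 * y 3 + (-1) * a 3 * is2 * x 5 * y 1 + (1) * a 3 * is2 * x 6 *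 y 2 + (-1) * a 3 * is2 * x 7 * y 0 + (-1) * a 4 * x 0 * y 5 + (-1) * a 4 * x 2 * y 3 + (1) * a 4 * x 3 * y 2 + (1) * a 4 * x 5 * y 0 + (1) * a 5 * x 0 * y 6 + (1) * a 5 * x 1 * y 3 + (-1) * a 5 * x 3 * y 1 + (-1) * a 5 * x 6 * y 0 + (-1) * a 6 * x 0 * y 4 + (-1) * a 6 * x 1 * y 2 + (1) * a 6 * x 2 * y 1 + (1) * a 6 * x 4 * y 0 := by
  simp only [act_apply, Bhat, Qhat, Pi.add_apply, actFun]; ring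

lemma bpp (x : W8) : Bhat x x = 2 * Qhat x := by
  simp only [Bhat, Qhat, Pi.add_apply]; ring

lemma bhat_sub_left (x y z : W8) : Bhat (x - y) z = Bhat x z - Bhat y z := by
  simp only [Bhat, Qhat, Pi.add_apply, Pi.sub_apply]; ring

lemma bhat_sub_right (x y z : W8) : Bhat x (y - z) = Bhat x y - Bhat x z := by
  simp only [Bhat, Qhat, Pi.add_apply, Pi.sub_apply]; ring

lemma bhat_smul_left (c : ℂ) (x y : W8) : Bhat (c • x) y = c * Bhat x y := by
  simp only [Bhat, Qhat, Pi.add_apply, Pi.smul_apply, smul_eq_mul]; ring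

lemma bhat_smul_right (c : ℂ) (x y : W8) : Bhat x (c • y) = c * Bhat x y := by
  simp only [Bhat, Qhat, Pi.add_apply, Pi.smul_apply, smul_eq_mul]; ring

lemma L0 (a : V7) (x : W8) : Bhat (act a x) x = 0 := by
  simp only [act_apply, Bhat, Qhat, Pi.add_apply, actFun]; ring

lemma L1 (a : V7) (x y : W8) : Bhat (act a x) y = - Bhat x (act a y) := by
  simp only [act_apply, Bhat, Qhat, Pi.add_apply, actFun]; ring

lemma L2 (a : V7) (x : W8) : act a (act a x) = -(Qform a) • x := by
  funext k
  fin_cases k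
  · show act a (act a x) 0 = (-(Qform a) • x) 0
    simp only [act_apply, actFun, Pi.smul_apply, smul_eq_mul, Qform, Bform]
    linear_combination ((1) * a 3^2 * x 0) * is2_sq_s16
  · show act a (act a x) 1 = (-(Qform a) • x) 1
    simp only [act_apply, actFun, Pi.smul_apply, smul_eq_mul, Qform, Bform]
    linear_combination ((1) * a 3^2 * x 1) * is2_sq_s16
  · show act a (act a x) 2 = (-(Qform a) • x) 2
    simp only [act_apply, actFun, Pi.smul_apply, smul_eq_mul, Qform, Bform]
    linear_combination ((1) * a 3^2 * x 2) * is2_sq_s16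
  · show act a (act a x) 3 = (-(Qform a) • x) 3
    simp only [act_apply, actFun, Pi.smul_apply, smul_eq_mul, Qform, Bform]
    linear_combination ((1) * a 3^2 * x 3) * is2_sq_s16
  · show act a (act a x) 4 = (-(Qform a) • x) 4
    simp only [act_apply, actFun, Pi.smul_apply, smul_eq_mul, Qform, Bform]
    linear_combination ((1) * a 3^2 * x 4) * is2_sq_s16
  · show act a (act a x) 5 = (-(Qform a) • x) 5
    simp only [act_apply, actFun, Pi.smul_apply, smul_eq_mul, Qform, Bform]
    linear_combination ((1) * a 3^2 * x 5) * is2_sq_s16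
  · show act a (act a x) 6 = (-(Qform a) • x) 6
    simp only [act_apply, actFun, Pi.smul_apply, smul_eq_mul, Qform, Bform]
    linear_combination ((1) * a 3^2 * x 6) * is2_sq_s16
  · show act a (act a x) 7 = (-(Qform a) • x) 7
    simp only [act_apply, actFun, Pi.smul_apply, smul_eq_mul, Qform, Bform]
    linear_combination ((1) * a 3^2 * x 7) * is2_sq_s16

lemma L5 (a b : V7) (x : W8) : act a (act b x) + act b (act a x) = -(Bform a b) • x := by
  funext k
  fin_cases k
  · show (act a (act b x) + act b (act a x)) 0 = (-(Bform a b) • x) 0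
    simp only [act_apply, actFun, Pi.add_apply, Pi.smul_apply, smul_eq_mul, Bform]
    linear_combination ((2) * a 3 * b 3 * x 0) * is2_sq_s16
  · show (act a (act b x) + act b (act a x)) 1 = (-(Bform a b) • x) 1
    simp only [act_apply, actFun, Pi.add_apply, Pi.smul_apply, smul_eq_mul, Bform]
    linear_combination ((2) * a 3 * b 3 * x 1) * is2_sq_s16
  · show (act a (act b x) + act b (act a x)) 2 = (-(Bform a b) • x) 2
    simp only [act_apply, actFun, Pi.add_apply, Pi.smul_apply, smul_eq_mul, Bform]
    linear_combination ((2) * a 3 * b 3 * x 2) * is2_sq_s16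
  · show (act a (act b x) + act b (act a x)) 3 = (-(Bform a b) • x) 3
    simp only [act_apply, actFun, Pi.add_apply, Pi.smul_apply, smul_eq_mul, Bform]
    linear_combination ((2) * a 3 * b 3 * x 3) * is2_sq_s16
  · show (act a (act b x) + act b (act a x)) 4 = (-(Bform a b) • x) 4
    simp only [act_apply, actFun, Pi.add_apply, Pi.smul_apply, smul_eq_mul, Bform]
    linear_combination ((2) * a 3 * b 3 * x 4) * is2_sq_s16
  · show (act a (act b x) + act b (act a x)) 5 = (-(Bform a b) • x) 5
    simp only [act_apply, actFun, Pi.add_apply, Pi.smul_apply, smul_eq_mul, Bform]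
    linear_combination ((2) * a 3 * b 3 * x 5) * is2_sq_s16
  · show (act a (act b x) + act b (act a x)) 6 = (-(Bform a b) • x) 6
    simp only [act_apply, actFun, Pi.add_apply, Pi.smul_apply, smul_eq_mul, Bform]
    linear_combination ((2) * a 3 * b 3 * x 6) * is2_sq_s16
  · show (act a (act b x) + act b (act a x)) 7 = (-(Bform a b) • x) 7
    simp only [act_apply, actFun, Pi.add_apply, Pi.smul_apply, smul_eq_mul, Bform]
    linear_combination ((2) * a 3 * b 3 * x 7) * is2_sq_s16

lemma act_inj (p : W8) (hp : Qhat p ≠ 0) (a : V7) (h : act a p = 0) : a = 0 := by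
  have hp' : p 0 * p 7 + p 2 * p 6 - p 3 * p 4 - p 5 * p 1 ≠ 0 := hp
  have h0 : -(a 0) * p 3 + a 1 * p 2 - a 2 * p 1 + is2 * a 3 * p 0 = 0 := by rw [← actc0 a p, h]; rfl
  have h1 : a 0 * p 6 - a 1 * p 4 - is2 * a 3 * p 1 + a 4 * p 0 = 0 := by rw [← actc1 a p, h]; rfl
  have h2 : a 0 * p 5 - a 2 * p 4 - is2 * a 3 * p 2 + a 5 * p 0 = 0 := by rw [← actc2 a p, h]; rfl
  have h3 : a 1 * p 5 - a 2 * p 6 - is2 * a 3 * p 3 + a 6 * p 0 = 0 := by rw [← actc3 a p, h]; rfl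
  have h4 : -(a 0) * p 7 + is2 * a 3 * p 4 + a 4 * p 2 - a 5 * p 1 = 0 := by rw [← actc4 a p, h]; rfl
  have h5 : -(a 2) * p 7 + is2 * a 3 * p 5 + a 5 * p 3 - a 6 * p 2 = 0 := by rw [← actc5 a p, h]; rfl
  have h6 : -(a 1) * p 7 + is2 * a 3 * p 6 + a 4 * p 3 - a 6 * p 1 = 0 := by rw [← actc6 a p, h]; rfl
  have h7 : -(is2 * a 3) * p 7 + a 4 * p 5 - a 5 * p 6 + a 6 * p 4 = 0 := by rw [← actc7 a p, h]; rfl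
  funext j
  fin_cases j
  · have e : (2 * (p 0 * p 7 + p 2 * p 6 - p 3 * p 4 - p 5 * p 1)) * a 0 = 0 := by
      linear_combination ((2) * p 4) * h0 + ((2) * p 2) * h1 + ((-2) * p 1) * h2 + ((-2) * p 0) * h4 + (0) * is2_sq_s16
    exact (mul_eq_zero.mp e).resolve_left (mul_ne_zero two_ne_zero hp')
  · have e : (2 * (p 0 * p 7 + p 2 * p 6 - p 3 * p 4 - p 5 * p 1)) * a 1 = 0 := by
      linear_combination ((2) * p 6) * h0 + ((2) * p 3) * h1 + ((-2) * p 1) * h3 + ((-2) * p 0) * h6 + (0) * is2_sq_s16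
    exact (mul_eq_zero.mp e).resolve_left (mul_ne_zero two_ne_zero hp')
  · have e : (2 * (p 0 * p 7 + p 2 * p 6 - p 3 * p 4 - p 5 * p 1)) * a 2 = 0 := by
      linear_combination ((2) * p 5) * h0 + ((2) * p 3) * h2 + ((-2) * p 2) * h3 + ((-2) * p 0) * h5 + (0) * is2_sq_s16
    exact (mul_eq_zero.mp e).resolve_left (mul_ne_zero two_ne_zero hp')
  · have e : (2 * (p 0 * p 7 + p 2 * p 6 - p 3 * p 4 - p 5 * p 1)) * a 3 = 0 := by
      linear_combination ((4) * p 7 * is2) * h0 + ((-4) * p 3 * is2) * h4 + ((-4) * p 1 * is2) * h5 + ((4) * p 2 * is2) * h6 + ((-4) * a 3 * p 0 * p 7 + (4) * a 3 * p 1 * p 5 + (-4) * a 3 * p 2 * p 6 + (4) * a 3 * p 3 * p 4) * is2_sq_s16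
    exact (mul_eq_zero.mp e).resolve_left (mul_ne_zero two_ne_zero hp')
  · have e : (2 * (p 0 * p 7 + p 2 * p 6 - p 3 * p 4 - p 5 * p 1)) * a 4 = 0 := by
      linear_combination ((2) * p 7) * h1 + ((2) * p 6) * h4 + ((-2) * p 4) * h6 + ((-2) * p 1) * h7 + (0) * is2_sq_s16
    exact (mul_eq_zero.mp e).resolve_left (mul_ne_zero two_ne_zero hp')
  · have e : (2 * (p 0 * p 7 + p 2 * p 6 - p 3 * p 4 - p 5 * p 1)) * a 5 = 0 := by
      linear_combination ((2) * p 7) * h2 + ((2) * p 5) * h4 + ((-2) * p 4) * h5 + ((-2) * p 2) * h7 + (0) * is2_sq_s16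
    exact (mul_eq_zero.mp e).resolve_left (mul_ne_zero two_ne_zero hp')
  · have e : (2 * (p 0 * p 7 + p 2 * p 6 - p 3 * p 4 - p 5 * p 1)) * a 6 = 0 := by
      linear_combination ((2) * p 7) * h3 + ((-2) * p 6) * h5 + ((2) * p 5) * h6 + ((-2) * p 3) * h7 + (0) * is2_sq_s16
    exact (mul_eq_zero.mp e).resolve_left (mul_ne_zero two_ne_zero hp')

lemma span8 (p : W8) (hp : Qhat p ≠ 0) (x : W8) (h1 : Bhat x p = 0)
    (h2 : ∀ a : V7, Bhat (act a p) x = 0) : x = 0 := by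
  have hp' : p 0 * p 7 + p 2 * p 6 - p 3 * p 4 - p 5 * p 1 ≠ 0 := hp
  rw [bhat_expand] at h1
  have t0 := h2 ![0, 0, 0, (-2) * p 0 * is2, (-2) * p 1, (-2) * p 2, (-2) * p 3]
  rw [bhat_act_expand] at t0
  simp only [cv0, cv1, cv2, cv3, cv4, cv5, cv6] at t0
  have t1 := h2 ![0, 0, (2) * p 0, (2) * p 1 * is2, 0, (2) * p 4, (2) * p 6]
  rw [bhat_act_expand] at t1
  simp only [cv0, cv1, cv2, cv3, cv4, cv5, cv6] at t1
  have t2 := h2 ![0, (-2) * p 0, 0, (2) * p 2 * is2, (-2) * p 4, 0, (2) * p 5]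
  rw [bhat_act_expand] at t2
  simp only [cv0, cv1, cv2, cv3, cv4, cv5, cv6] at t2
  have t3 := h2 ![(2) * p 0, 0, 0, (2) * p 3 * is2, (-2) * p 6, (-2) * p 5, 0]
  rw [bhat_act_expand] at t3
  simp only [cv0, cv1, cv2, cv3, cv4, cv5, cv6] at t3
  have t4 := h2 ![0, (2) * p 1, (2) * p 2, (-2) * p 4 * is2, 0, 0, (-2) * p 7]
  rw [bhat_act_expand] at t4
  simp only [cv0, cv1, cv2, cv3, cv4, cv5, cv6] at t4
  have t5 := h2 ![(-2) * p 2, (-2) * p 3, 0, (-2) * p 5 * is2, (-2) * p 7, 0, 0]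
  rw [bhat_act_expand] at t5
  simp only [cv0, cv1, cv2, cv3, cv4, cv5, cv6] at t5
  have t6 := h2 ![(-2) * p 1, 0, (2) * p 3, (-2) * p 6 * is2, 0, (2) * p 7, 0]
  rw [bhat_act_expand] at t6
  simp only [cv0, cv1, cv2, cv3, cv4, cv5, cv6] at t6
  have t7 := h2 ![(2) * p 4, (2) * p 6, (2) * p 5, (2) * p 7 * is2, 0, 0, 0]
  rw [bhat_act_expand] at t7
  simp only [cv0, cv1, cv2, cv3, cv4, cv5, cv6] at t7
  funext j
  fin_cases j
  · have e : (2 * (p 0 * p 7 + p 2 * p 6 - p 3 * p 4 - p 5 * p 1)) * x 0 = 0 := by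
      linear_combination t0 + ((1) * p 0) * h1 + ((2) * p 0 * p 1 * x 5 + (-2) * p 0 * p 2 * x 6 + (2) * p 0 * p 3 * x 4 + (-2) * p 0 * p 4 * x 3 + (-2) * p 0 * p 5 * x 1 + (2) * p 0 * p 6 * x 2 + (-2) * p 0 * p 7 * x 0 + (2) * p 0^2 * x 7) * is2_sq_s16
    exact (mul_eq_zero.mp e).resolve_left (mul_ne_zero two_ne_zero hp')
  · have e : (2 * (p 0 * p 7 + p 2 * p 6 - p 3 * p 4 - p 5 * p 1)) * x 1 = 0 := by
      linear_combination t1 + ((1) * p 1) * h1 + ((-2) * p 0 * p 1 * x 7 + (2) * p 1 * p 2 * x 6 + (-2) * p 1 * p 3 * x 4 + (2) * p 1 * p 4 * x 3 + (2) * p 1 * p 5 * x 1 + (-2) * p 1 * p 6 * x 2 + (2) * p 1 * p 7 * x 0 + (-2) * p 1^2 * x 5) * is2_sq_s16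
    exact (mul_eq_zero.mp e).resolve_left (mul_ne_zero two_ne_zero hp')
  · have e : (2 * (p 0 * p 7 + p 2 * p 6 - p 3 * p 4 - p 5 * p 1)) * x 2 = 0 := by
      linear_combination t2 + ((1) * p 2) * h1 + ((-2) * p 0 * p 2 * x 7 + (-2) * p 1 * p 2 * x 5 + (-2) * p 2 * p 3 * x 4 + (2) * p 2 * p 4 * x 3 + (2) * p 2 * p 5 * x 1 + (-2) * p 2 * p 6 * x 2 + (2) * p 2 * p 7 * x 0 + (2) * p 2^2 * x 6) * is2_sq_s16
    exact (mul_eq_zero.mp e).resolve_left (mul_ne_zero two_ne_zero hp')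
  · have e : (2 * (p 0 * p 7 + p 2 * p 6 - p 3 * p 4 - p 5 * p 1)) * x 3 = 0 := by
      linear_combination t3 + ((1) * p 3) * h1 + ((-2) * p 0 * p 3 * x 7 + (-2) * p 1 * p 3 * x 5 + (2) * p 2 * p 3 * x 6 + (2) * p 3 * p 4 * x 3 + (2) * p 3 * p 5 * x 1 + (-2) * p 3 * p 6 * x 2 + (2) * p 3 * p 7 * x 0 + (-2) * p 3^2 * x 4) * is2_sq_s16
    exact (mul_eq_zero.mp e).resolve_left (mul_ne_zero two_ne_zero hp')
  · have e : (2 * (p 0 * p 7 + p 2 * p 6 - p 3 * p 4 - p 5 * p 1)) * x 4 = 0 := by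
      linear_combination t4 + ((1) * p 4) * h1 + ((2) * p 0 * p 4 * x 7 + (2) * p 1 * p 4 * x 5 + (-2) * p 2 * p 4 * x 6 + (2) * p 3 * p 4 * x 4 + (-2) * p 4 * p 5 * x 1 + (2) * p 4 * p 6 * x 2 + (-2) * p 4 * p 7 * x 0 + (-2) * p 4^2 * x 3) * is2_sq_s16
    exact (mul_eq_zero.mp e).resolve_left (mul_ne_zero two_ne_zero hp')
  · have e : (2 * (p 0 * p 7 + p 2 * p 6 - p 3 * p 4 - p 5 * p 1)) * x 5 = 0 := by
      linear_combination t5 + ((1) * p 5) * h1 + ((2) * p 0 * p 5 * x 7 + (2) * p 1 * p 5 * x 5 + (-2) * p 2 * p 5 * x 6 + (2) * p 3 * p 5 * x 4 + (-2) * p 4 * p 5 * x 3 + (2) * p 5 * p 6 * x 2 + (-2) * p 5 * p 7 * x 0 + (-2) * p 5^2 * x 1) * is2_sq_s16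
    exact (mul_eq_zero.mp e).resolve_left (mul_ne_zero two_ne_zero hp')
  · have e : (2 * (p 0 * p 7 + p 2 * p 6 - p 3 * p 4 - p 5 * p 1)) * x 6 = 0 := by
      linear_combination t6 + ((1) * p 6) * h1 + ((2) * p 0 * p 6 * x 7 + (2) * p 1 * p 6 * x 5 + (-2) * p 2 * p 6 * x 6 + (2) * p 3 * p 6 * x 4 + (-2) * p 4 * p 6 * x 3 + (-2) * p 5 * p 6 * x 1 + (-2) * p 6 * p 7 * x 0 + (2) * p 6^2 * x 2) * is2_sq_s16
    exact (mul_eq_zero.mp e).resolve_left (mul_ne_zero two_ne_zero hp')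
  · have e : (2 * (p 0 * p 7 + p 2 * p 6 - p 3 * p 4 - p 5 * p 1)) * x 7 = 0 := by
      linear_combination t7 + ((1) * p 7) * h1 + ((-2) * p 0 * p 7 * x 7 + (-2) * p 1 * p 7 * x 5 + (2) * p 2 * p 7 * x 6 + (-2) * p 3 * p 7 * x 4 + (2) * p 4 * p 7 * x 3 + (2) * p 5 * p 7 * x 1 + (-2) * p 6 * p 7 * x 2 + (2) * p 7^2 * x 0) * is2_sq_s16
    exact (mul_eq_zero.mp e).resolve_left (mul_ne_zero two_ne_zero hp')

/-- let `Q̂(p) ≠ 0`, `w(a,b,c) = B̂(a·(b·(c·p)),p)` and let `v` be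
non-isotropic.  The kernel of the 2-form `w(v,·,·)` is the line `ℂv`. -/
theorem statement_16 (p : W8) (hp : Qhat p ≠ 0) (v : V7) (hq : Qform v ≠ 0) :
    {u : V7 | ∀ a : V7, Bhat (act v (act u (act a p))) p = 0}
      = (Submodule.span ℂ {v} : Set V7) := by
  ext u
  simp only [Set.mem_setOf_eq, SetLike.mem_coe, Submodule.mem_span_singleton]
  have h2Q : (2 : ℂ) * Qhat p ≠ 0 := mul_ne_zero two_ne_zero hp
  constructor
  · intro h
    have step1 : ∀ a : V7, Bhat (act a p) (act u (act v p)) = 0 := by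
      intro a
      have hh := h a
      rw [L1, L1] at hh
      simpa using hh
    set lam : ℂ := Bhat (act u (act v p)) p / (2 * Qhat p) with hlam
    have hxz : act u (act v p) - lam • p = 0 := by
      apply span8 p hp
      · rw [bhat_sub_left, bhat_smul_left, bpp, hlam, div_mul_cancel₀ _ h2Q, sub_self]
      · intro a
        rw [bhat_sub_right, bhat_smul_right, step1 a, L0, mul_zero, sub_zero]
    have hz : act u (act v p) = lam • p := by rwa [sub_eq_zero] at hxz
    have hv5 := L5 v u (act v p)
    rw [hz, map_smul, L2, map_smul] at hv5
    have e8 : act (Qform v • u - (lam + Bform v u) • v) p = 0 := by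
      rw [map_sub, LinearMap.sub_apply, LinearMap.map_smul₂, LinearMap.map_smul₂]
      funext k
      have h5k := congrFun hv5 k
      simp only [Pi.add_apply, Pi.smul_apply, Pi.neg_apply, smul_eq_mul, Pi.sub_apply,
        Pi.zero_apply] at h5k ⊢
      linear_combination -h5k
    have e9 := act_inj p hp _ e8
    refine ⟨(lam + Bform v u) / Qform v, funext fun k => ?_⟩
    have hk := congrFun e9 k
    simp only [Pi.sub_apply, Pi.smul_apply, smul_eq_mul, Pi.zero_apply] at hk
    simp only [Pi.smul_apply, smul_eq_mul]
    rw [div_mul_eq_mul_div, div_eq_iff hq]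
    linear_combination -hk
  · rintro ⟨c, rfl⟩ a
    rw [LinearMap.map_smul₂, map_smul, L2, bhat_smul_left, bhat_smul_left, L0,
      mul_zero, mul_zero]

end
end SSD
end
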